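/- For λ ≠ −1/α with |λα| < 1 and α > 0, the variance of the degenerate zero-truncated Poisson random variable X_λ equals (α(1+α)/(1+αλ)²) · e_λ(α)/(e_λ(α)−1) − (α/(1+αλ))² · (e_λ(α)/(e_λ(α)−1))². -/

import Mathlib

open Real Filter Finset

/-
With `p = 1 / λ` we have `(x)_{n,λ} t^n / n! = (x/λ choose n) (λt)^n`, so by the binomial series
these weights sum to `(1 + λt)^{x/λ}`; for `x = 1`, `t = α` this is `e_λ(α)`. Since
`(x)_{n+1,λ} = x (x-λ)_{n,λ}`, the factorial moments `∑ n (x)_{n,λ} t^n / n!` and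
`∑ n(n-1) (x)_{n,λ} t^n / n!` are again such series with `x` lowered by `λ`, which gives
`E[X] = α e / ((1+λα)(e-1))` and `E[X(X-1)] = (1-λ) α² e / ((1+λα)²(e-1))`.
-/

/-- λ-falling factorial (x)_{n,λ} = x(x-λ)⋯(x-(n-1)λ). -/
noncomputable def dfall (lam x : ℝ) (n : ℕ) : ℝ := ∏ j ∈ Finset.range n, (x - j * lam)

/-- degenerate exponential e_λ(t) = (1+λt)^{1/λ}. -/
noncomputable def dexp (lam t : ℝ) : ℝ := (1 + lam * t) ^ (1 / lam)

/-- PMF of the degenerate zero-truncated Poisson random variable (for n ≥ 1). -/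
noncomputable def ztP (lam a : ℝ) (n : ℕ) : ℝ :=
  1 / (dexp lam a - 1) * (a ^ n / (Nat.factorial n : ℝ)) * dfall lam 1 n

theorem Ring.choose_eq_prod_range_div_factorial (r : ℝ) (n : ℕ) :
    Ring.choose r n = (∏ j ∈ range n, (r - j)) / n.factorial := by
  rw [Ring.choose_eq_smul, ← descPochhammer_eval_eq_prod_range, smul_eq_mul, inv_mul_eq_div,
    ← descPochhammer_map (algebraMap ℤ ℝ), Polynomial.eval_map_algebraMap,
    Polynomial.aeval_eq_smeval]

theorem Real.hasSum_choose_mul_pow (r : ℝ) {x : ℝ} (hx : |x| < 1) :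
    HasSum (fun n => Ring.choose r n * x ^ n) ((1 + x) ^ r) := by
  have h := Real.one_add_rpow_hasFPowerSeriesOnBall_zero (a := r) |>.hasSum
    (y := x) (by simpa [edist_dist] using hx)
  simpa [binomialSeries, FormalMultilinearSeries.ofScalars_apply_eq, mul_comm] using h

theorem dfall_succ (lam x : ℝ) (n : ℕ) : dfall lam x (n + 1) = x * dfall lam (x - lam) n := by
  simp only [dfall, prod_range_succ']
  rw [mul_comm]
  congr 1
  · simp
  · exact prod_congr rfl fun j _ => by push_cast; ring

theorem dfall_eq_pow_mul_prod {lam : ℝ} (hlam : lam ≠ 0) (x : ℝ) (n : ℕ) :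
    dfall lam x n = lam ^ n * ∏ j ∈ range n, (x / lam - j) := by
  calc dfall lam x n = ∏ j ∈ range n, lam * (x / lam - j) :=
        prod_congr rfl fun j _ => by field_simp
    _ = _ := by rw [prod_mul_distrib, prod_const, card_range]

theorem dfall_mul_pow_div_factorial {lam : ℝ} (hlam : lam ≠ 0) (x t : ℝ) (n : ℕ) :
    dfall lam x n * t ^ n / n.factorial = Ring.choose (x / lam) n * (lam * t) ^ n := by
  rw [dfall_eq_pow_mul_prod hlam, Ring.choose_eq_prod_range_div_factorial]
  ring

theorem hasSum_dfall_mul_pow_div_factorial {lam t : ℝ} (hlam : lam ≠ 0) (ht : |lam * t| < 1)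
    (x : ℝ) : HasSum (fun n => dfall lam x n * t ^ n / n.factorial) ((1 + lam * t) ^ (x / lam)) := by
  simpa only [dfall_mul_pow_div_factorial hlam] using Real.hasSum_choose_mul_pow (x / lam) ht

theorem succ_mul_dfall_mul_pow_div_factorial (lam x t : ℝ) (n : ℕ) :
    (n + 1 : ℝ) * (dfall lam x (n + 1) * t ^ (n + 1) / (n + 1).factorial)
      = x * t * (dfall lam (x - lam) n * t ^ n / n.factorial) := by
  rw [dfall_succ, Nat.factorial_succ]
  push_cast
  field_simp
  ring

theorem hasSum_mul_dfall_mul_pow_div_factorial {lam t : ℝ} (hlam : lam ≠ 0) (ht : |lam * t| < 1)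
    (x : ℝ) : HasSum (fun n : ℕ => n * (dfall lam x n * t ^ n / n.factorial))
      (x * t * (1 + lam * t) ^ (x / lam) / (1 + lam * t)) := by
  have hpos : 0 < 1 + lam * t := by linarith [neg_abs_le (lam * t)]
  have hexp : (x - lam) / lam = x / lam - 1 := by field_simp
  have h := (hasSum_dfall_mul_pow_div_factorial hlam ht (x - lam)).mul_left (x * t)
  rw [hexp, rpow_sub hpos, rpow_one] at h
  rw [← hasSum_nat_add_iff' 1, sum_range_one, Nat.cast_zero, zero_mul, sub_zero, mul_div_assoc]
  exact h.congr_fun fun n => by push_cast; exact succ_mul_dfall_mul_pow_div_factorial lam x t n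

theorem hasSum_mul_sub_one_mul_dfall_mul_pow_div_factorial {lam t : ℝ} (hlam : lam ≠ 0)
    (ht : |lam * t| < 1) (x : ℝ) :
    HasSum (fun n : ℕ => n * (n - 1) * (dfall lam x n * t ^ n / n.factorial))
      (x * (x - lam) * t ^ 2 * (1 + lam * t) ^ (x / lam) / (1 + lam * t) ^ 2) := by
  have hpos : 0 < 1 + lam * t := by linarith [neg_abs_le (lam * t)]
  have hexp : (x - lam) / lam = x / lam - 1 := by field_simp
  have h := (hasSum_mul_dfall_mul_pow_div_factorial hlam ht (x - lam)).mul_left (x * t)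
  rw [hexp, rpow_sub hpos, rpow_one] at h
  have hval : x * (x - lam) * t ^ 2 * (1 + lam * t) ^ (x / lam) / (1 + lam * t) ^ 2
      = x * t * ((x - lam) * t * ((1 + lam * t) ^ (x / lam) / (1 + lam * t)) / (1 + lam * t)) := by
    field_simp
  rw [← hasSum_nat_add_iff' 1, sum_range_one, Nat.cast_zero, zero_mul, zero_mul, sub_zero, hval]
  refine h.congr_fun fun n => ?_
  push_cast
  linear_combination (n : ℝ) * succ_mul_dfall_mul_pow_div_factorial lam x t n

theorem hasSum_sq_mul_dfall_mul_pow_div_factorial {lam t : ℝ} (hlam : lam ≠ 0)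
    (ht : |lam * t| < 1) (x : ℝ) :
    HasSum (fun n : ℕ => n ^ 2 * (dfall lam x n * t ^ n / n.factorial))
      (x * t * ((x - lam) * t + 1 + lam * t) * (1 + lam * t) ^ (x / lam) / (1 + lam * t) ^ 2) := by
  convert (hasSum_mul_sub_one_mul_dfall_mul_pow_div_factorial hlam ht x).add
    (hasSum_mul_dfall_mul_pow_div_factorial hlam ht x) using 1
  · funext n
    ring
  · field_simp
    ring

theorem hasSum_succ_mul_ztP {lam a S : ℝ} {g : ℕ → ℝ} (hg : g 0 = 0)
    (h : HasSum (fun n => g n * (dfall lam 1 n * a ^ n / n.factorial)) S) :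
    HasSum (fun n => g (n + 1) * ztP lam a (n + 1)) ((dexp lam a - 1)⁻¹ * S) := by
  have h' := (hasSum_nat_add_iff' 1).mpr (h.mul_left (dexp lam a - 1)⁻¹)
  rw [sum_range_one, hg, zero_mul, mul_zero, sub_zero] at h'
  exact h'.congr_fun fun n => by rw [ztP]; ring

theorem stmt4_general (lam a : ℝ) (habs : |lam * a| < 1) :
    (∑' n : ℕ, ((n + 1 : ℕ) : ℝ) ^ 2 * ztP lam a (n + 1))
      - (∑' n : ℕ, ((n + 1 : ℕ) : ℝ) * ztP lam a (n + 1)) ^ 2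
    = a * (1 + a) / (1 + a * lam) ^ 2 * (dexp lam a / (dexp lam a - 1))
      - (a / (1 + a * lam)) ^ 2 * (dexp lam a / (dexp lam a - 1)) ^ 2 := by
  rcases eq_or_ne lam 0 with rfl | hlam
  -- `dexp 0 a = 1 ^ (1 / 0) = 1`, so `ztP 0 a = 0` and the right side divides by zero.
  · simp [ztP, dexp]
  have hmean := hasSum_succ_mul_ztP (g := fun n => (n : ℝ)) Nat.cast_zero
    (hasSum_mul_dfall_mul_pow_div_factorial hlam habs 1)
  have hsq := hasSum_succ_mul_ztP (g := fun n => (n : ℝ) ^ 2) (by simp)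
    (hasSum_sq_mul_dfall_mul_pow_div_factorial hlam habs 1)
  rw [hsq.tsum_eq, hmean.tsum_eq, div_eq_mul_inv (dexp lam a)]
  simp only [dexp]
  field_simp
  ring

theorem stmt4 (lam a : ℝ) (ha : 0 < a) (hne : lam ≠ -(1 / a)) (habs : |lam * a| < 1) :
    (∑' n : ℕ, ((n + 1 : ℕ) : ℝ) ^ 2 * ztP lam a (n + 1))
      - (∑' n : ℕ, ((n + 1 : ℕ) : ℝ) * ztP lam a (n + 1)) ^ 2
    = a * (1 + a) / (1 + a * lam) ^ 2 * (dexp lam a / (dexp lam a - 1))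
      - (a / (1 + a * lam)) ^ 2 * (dexp lam a / (dexp lam a - 1)) ^ 2 :=
  stmt4_general lam a habs
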